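/- arXiv:2310.03355 — 6 statements merged into one kernel-verified Lean document; each statement's English description precedes it below -/
import Mathlib

section
/- Let m be a positive integer with prime factorization m = p_1^{α_1} p_2^{α_2} ⋯ p_r^{α_r}, where p_1, …, p_r are r ≥ 2 distinct primes. Then there exists a constant c > 0 (depending only on m) such that for every n ≥ 1 there is a multilinear polynomial P with integer coefficients in n variables, of total degree at most c · n^{1/r}, which weakly represents OR_n modulo m. -/
/-!
Modulo a prime `p`, Lucas' theorem identifies `C(s, p^j)` with the `j`-th base-`p` digit of `s`,
so by Fermat `1 - ∏_{j<k} (1 - C(s, p^j)^(p-1))` is `1 mod p` whenever `p^k ∤ s`, and `0` at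
`s = 0`. At the Hamming weight `s` of a 0-1 input this is a symmetric polynomial of degree
`≤ p^k`. Pick `p_i^{k_i} ∈ (u, p_i u]` with `u ≈ n^{1/r}`: then `∏ p_i^{k_i} > u^r ≥ n`, so every
nonzero weight `s ≤ n` escapes divisibility by some `p_i^{k_i}`. Gluing the `r` tests gives a
polynomial that vanishes at `0` and is nonzero modulo some `p_i ∣ m` at every other 0-1 point;
lowering all exponents to `1` makes it multilinear without changing its values on `{0,1}^n`.
-/

/-- A multilinear polynomial: every variable occurs to degree at most 1 in every monomial. -/
def IsMultilinear {n : ℕ} (P : MvPolynomial (Fin n) ℤ) : Prop :=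
  ∀ d ∈ P.support, ∀ i, d i ≤ 1

/-- `P` weakly represents the `n`-variable OR function modulo `m`: there is a set `S` of
least nonnegative residues mod `m` such that for every 0-1 input `x`,
`OR_n(x) = 0` (i.e. `x = 0`) iff `P(x) mod m ∈ S`. -/
def WeaklyRepresentsOR {n : ℕ} (P : MvPolynomial (Fin n) ℤ) (m : ℕ) : Prop :=
  ∃ S : Finset ℤ, (∀ s ∈ S, 0 ≤ s ∧ s < (m : ℤ)) ∧
    ∀ x : Fin n → ℤ, (∀ i, x i = 0 ∨ x i = 1) →
      ((MvPolynomial.eval x P) % (m : ℤ) ∈ S ↔ x = 0)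

open Finset

namespace MvPolynomial

section Multilinearize

variable {σ R : Type*} [CommSemiring R]

noncomputable def multilinearize (P : MvPolynomial σ R) : MvPolynomial σ R :=
  ∑ d ∈ P.support, monomial (d.mapRange (min 1) (by simp)) (P.coeff d)

theorem totalDegree_multilinearize_le (P : MvPolynomial σ R) :
    (multilinearize P).totalDegree ≤ P.totalDegree := by
  refine (totalDegree_finsetSum _ _).trans <| Finset.sup_le fun d hd => ?_
  refine (totalDegree_monomial_le _ _).trans <| le_trans ?_ (le_totalDegree hd)
  rw [Finsupp.sum_mapRange_index (fun _ => rfl)]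
  exact Finset.sum_le_sum fun i _ => min_le_right _ _

theorem eval_multilinearize {x : σ → R} (hx : ∀ i, x i = 0 ∨ x i = 1) (P : MvPolynomial σ R) :
    eval x (multilinearize P) = eval x P := by
  conv_rhs => rw [P.as_sum]
  rw [multilinearize, map_sum, map_sum]
  refine sum_congr rfl fun d _ => ?_
  rw [eval_monomial, eval_monomial, Finsupp.prod_mapRange_index (fun _ => pow_zero _)]
  congr 1
  refine Finsupp.prod_congr fun i hi => ?_
  have hdi : d i ≠ 0 := Finsupp.mem_support_iff.mp hi
  rcases hx i with h | h <;> simp [h, hdi]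

theorem isMultilinear_multilinearize {n : ℕ} (P : MvPolynomial (Fin n) ℤ) :
    IsMultilinear (multilinearize P) := by
  intro d hd i
  obtain ⟨e, -, hde⟩ := mem_biUnion.mp (support_sum hd)
  rw [Finset.mem_singleton.mp (support_monomial_subset hde)]
  exact min_le_left _ _

end Multilinearize

section Esymm

variable {σ R : Type*} [Fintype σ] [CommSemiring R]

theorem isHomogeneous_esymm (d : ℕ) : (esymm σ R d).IsHomogeneous d :=
  IsHomogeneous.sum _ _ _ fun t ht => by
    simpa [(mem_powersetCard.mp ht).2] using
      IsHomogeneous.prod t _ _ fun i _ => isHomogeneous_X R i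

theorem eval_esymm_of_forall_eq_zero_or_eq_one [DecidableEq R] {x : σ → R}
    (hx : ∀ i, x i = 0 ∨ x i = 1) (d : ℕ) :
    eval x (esymm σ R d) = (#{i | x i = 1}).choose d := by
  classical
  set A : Finset σ := {i | x i = 1}
  have hprod : ∀ t : Finset σ, ∏ i ∈ t, x i = if t ⊆ A then 1 else 0 := by
    intro t
    split_ifs with ht
    · exact prod_eq_one fun i hi => (mem_filter.mp (ht hi)).2
    · obtain ⟨i, hi, hiA⟩ := not_subset.mp ht
      exact prod_eq_zero hi ((hx i).resolve_right fun h => hiA (by simp [A, h]))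
  have hfilter : {t ∈ powersetCard d (univ : Finset σ) | t ⊆ A} = powersetCard d A := by
    ext t
    simp only [mem_filter, mem_powersetCard, subset_univ, true_and, and_comm]
  simp only [esymm, map_sum, map_prod, eval_X, hprod, sum_boole, hfilter, card_powersetCard]

end Esymm

end MvPolynomial

open MvPolynomial

theorem choose_prime_pow_modEq_div (p : ℕ) [Fact p.Prime] (s j : ℕ) :
    (s.choose (p ^ j) : ℤ) ≡ (s / p ^ j : ℕ) [ZMOD p] := by
  have hp : 0 < p := (Fact.out : p.Prime).pos
  refine (Choose.choose_modEq_choose_mul_prod_range_choose j).trans ?_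
  rw [Nat.div_self (pow_pos hp j), Nat.choose_one_right, prod_eq_one, Nat.cast_one, mul_one]
  intro i hi
  rw [Nat.pow_div (mem_range.mp hi).le hp, Nat.pow_mod, Nat.mod_self,
    zero_pow (Nat.sub_ne_zero_of_lt (mem_range.mp hi)), Nat.zero_mod, Nat.choose_zero_right]

theorem exists_lt_not_dvd_div_pow {p k s : ℕ} (hp : p.Prime) (h : ¬ p ^ k ∣ s) :
    ∃ j < k, ¬ p ∣ s / p ^ j := by
  have hs : s ≠ 0 := by rintro rfl; exact h (dvd_zero _)
  refine ⟨s.factorization p, ?_, Nat.not_dvd_ordCompl hp hs⟩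
  by_contra! hk
  exact h ((pow_dvd_pow p hk).trans (Nat.ordProj_dvd s p))

theorem exists_not_pow_dvd_of_lt_prod {ι : Type*} [Fintype ι] {p k : ι → ℕ}
    (hp : ∀ i, (p i).Prime) (hinj : Function.Injective p) {s : ℕ} (hs : s ≠ 0)
    (hlt : s < ∏ i, p i ^ k i) : ∃ i, ¬ p i ^ k i ∣ s := by
  by_contra! hdvd
  have hcop : Pairwise (Function.onFun IsRelPrime fun i => p i ^ k i) := fun i j hij =>
    Nat.coprime_iff_isRelPrime.mp <|
      ((Nat.coprime_primes (hp i) (hp j)).mpr (hinj.ne hij)).pow _ _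
  exact (Nat.le_of_dvd (Nat.pos_of_ne_zero hs)
    (Fintype.prod_dvd_of_isRelPrime hcop hdvd)).not_gt hlt

theorem exists_pow_lt_le_mul {p u : ℕ} (hp : 1 < p) (hu : u ≠ 0) :
    ∃ k, u < p ^ k ∧ p ^ k ≤ p * u :=
  ⟨Nat.log p u + 1, Nat.lt_pow_succ_log_self hp u, by
    rw [pow_succ']; exact Nat.mul_le_mul_left p (Nat.pow_log_le_self p hu)⟩

section LowDigitsTest

variable (σ : Type*) [Fintype σ]

noncomputable def lowDigitsTest (p k : ℕ) : MvPolynomial σ ℤ :=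
  1 - ∏ j ∈ range k, (1 - esymm σ ℤ (p ^ j) ^ (p - 1))

variable {σ}

theorem totalDegree_lowDigitsTest_le {p : ℕ} (hp : 1 ≤ p) (k : ℕ) :
    (lowDigitsTest σ p k).totalDegree ≤ p ^ k :=
  calc (lowDigitsTest σ p k).totalDegree
      ≤ ∑ j ∈ range k, (1 - esymm σ ℤ (p ^ j) ^ (p - 1)).totalDegree := by
        refine (totalDegree_sub _ _).trans (max_le (by simp) (totalDegree_finsetProd _ _))
    _ ≤ ∑ j ∈ range k, p ^ j * (p - 1) := by
        refine sum_le_sum fun j _ => (totalDegree_sub _ _).trans (max_le (by simp) ?_)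
        refine (totalDegree_pow _ _).trans ?_
        rw [mul_comm]
        gcongr
        exact (isHomogeneous_esymm _).totalDegree_le
    _ = p ^ k - 1 := by rw [← sum_mul, geom_sum_mul_of_one_le hp]
    _ ≤ p ^ k := Nat.sub_le _ _

theorem eval_zero_lowDigitsTest {p : ℕ} (hp : 1 < p) (k : ℕ) :
    eval 0 (lowDigitsTest σ p k) = 0 := by
  have hesymm (j : ℕ) : eval 0 (esymm σ ℤ (p ^ j)) = 0 := by
    rw [eval_esymm_of_forall_eq_zero_or_eq_one (x := 0) (fun _ => Or.inl rfl)]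
    simpa using Nat.choose_eq_zero_of_lt (pow_pos (zero_lt_one.trans hp) j)
  simp only [lowDigitsTest, map_sub, map_one, map_prod, map_pow, hesymm,
    zero_pow (Nat.sub_ne_zero_of_lt hp), sub_zero, prod_const_one, sub_self]

theorem intCast_eval_lowDigitsTest {p k : ℕ} [hp : Fact p.Prime] {x : σ → ℤ}
    (hx : ∀ i, x i = 0 ∨ x i = 1) (hk : ¬ p ^ k ∣ #{i | x i = 1}) :
    ((eval x (lowDigitsTest σ p k) : ℤ) : ZMod p) = 1 := by
  obtain ⟨j, hjk, hdigit⟩ := exists_lt_not_dvd_div_pow hp.out hk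
  have hchoose : (((#{i | x i = 1}).choose (p ^ j) : ℤ) : ZMod p) ≠ 0 := by
    rw [(ZMod.intCast_eq_intCast_iff _ _ _).mpr (choose_prime_pow_modEq_div p _ j)]
    exact_mod_cast (ZMod.natCast_eq_zero_iff _ p).not.mpr hdigit
  simp only [lowDigitsTest, map_sub, map_one, map_prod, map_pow,
    eval_esymm_of_forall_eq_zero_or_eq_one hx, Int.cast_sub, Int.cast_one, Int.cast_prod,
    Int.cast_pow]
  rw [prod_eq_zero (mem_range.mpr hjk) (by rw [ZMod.pow_card_sub_one_eq_one hchoose, sub_self]),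
    sub_zero]

end LowDigitsTest

section CRTGlue

variable (σ : Type*) [Fintype σ] {ι : Type*} [Fintype ι] [DecidableEq ι]

/-- Modulo `p i`, the coefficient `∏_{j ≠ i} p j` kills every summand except the `i`-th. -/
noncomputable def crtLowDigitsTest (p k : ι → ℕ) : MvPolynomial σ ℤ :=
  ∑ i, C (∏ j ∈ univ.erase i, (p j : ℤ)) * lowDigitsTest σ (p i) (k i)

variable {σ} {p k : ι → ℕ}

theorem totalDegree_crtLowDigitsTest_le (hp : ∀ i, 1 ≤ p i) {D : ℕ} (hD : ∀ i, p i ^ k i ≤ D) :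
    (crtLowDigitsTest σ p k).totalDegree ≤ D := by
  refine (totalDegree_finsetSum _ _).trans <| Finset.sup_le fun i _ => ?_
  refine (totalDegree_mul _ _).trans ?_
  rw [totalDegree_C, zero_add]
  exact (totalDegree_lowDigitsTest_le (hp i) (k i)).trans (hD i)

theorem eval_zero_crtLowDigitsTest (hp : ∀ i, 1 < p i) :
    eval 0 (crtLowDigitsTest σ p k) = 0 := by
  simp only [crtLowDigitsTest, map_sum, map_mul, eval_C, eval_zero_lowDigitsTest (hp _), mul_zero,
    sum_const_zero]

theorem intCast_eval_crtLowDigitsTest_ne_zero (hp : ∀ i, (p i).Prime)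
    (hinj : Function.Injective p) {x : σ → ℤ} (hx : ∀ i, x i = 0 ∨ x i = 1) {i : ι}
    (hi : ¬ p i ^ k i ∣ #{j | x j = 1}) :
    ((eval x (crtLowDigitsTest σ p k) : ℤ) : ZMod (p i)) ≠ 0 := by
  have : Fact (p i).Prime := ⟨hp i⟩
  have hother (j : ι) (hj : j ≠ i) : ((∏ l ∈ univ.erase j, (p l : ℤ) : ℤ) : ZMod (p i)) = 0 := by
    push_cast
    exact prod_eq_zero (mem_erase.mpr ⟨hj.symm, mem_univ i⟩) (ZMod.natCast_self _)
  have hself : ((∏ l ∈ univ.erase i, (p l : ℤ) : ℤ) : ZMod (p i)) ≠ 0 := by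
    push_cast
    refine prod_ne_zero_iff.mpr fun l hl => ?_
    rw [Ne, ZMod.natCast_eq_zero_iff, Nat.prime_dvd_prime_iff_eq (hp i) (hp l)]
    exact hinj.ne (mem_erase.mp hl).1.symm
  rw [crtLowDigitsTest, map_sum, Int.cast_sum, sum_eq_single i (fun j _ hj => by
      rw [map_mul, eval_C, Int.cast_mul, hother j hj, zero_mul]) (by simp),
    map_mul, eval_C, Int.cast_mul, intCast_eval_lowDigitsTest hx hi, mul_one]
  exact hself

end CRTGlue

theorem weaklyRepresentsOR_of_not_dvd {n m : ℕ} {P : MvPolynomial (Fin n) ℤ} (hm : 0 < m)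
    (h0 : eval 0 P = 0)
    (h : ∀ x : Fin n → ℤ, (∀ i, x i = 0 ∨ x i = 1) → x ≠ 0 → ¬ (m : ℤ) ∣ eval x P) :
    WeaklyRepresentsOR P m := by
  refine ⟨{0}, by simpa using hm, fun x hx => ?_⟩
  rw [mem_singleton, ← Int.dvd_iff_emod_eq_zero]
  refine ⟨fun hdvd => by_contra fun hx0 => h x hx hx0 hdvd, ?_⟩
  rintro rfl
  rw [h0]
  exact dvd_zero _

theorem exists_multilinear_weaklyRepresentsOR {ι : Type*} [Fintype ι] {p k : ι → ℕ} {m n D : ℕ}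
    (hp : ∀ i, (p i).Prime) (hinj : Function.Injective p) (hpm : ∀ i, p i ∣ m) (hm : 0 < m)
    (hn : n < ∏ i, p i ^ k i) (hD : ∀ i, p i ^ k i ≤ D) :
    ∃ P : MvPolynomial (Fin n) ℤ,
      IsMultilinear P ∧ P.totalDegree ≤ D ∧ WeaklyRepresentsOR P m := by
  classical
  set Q := crtLowDigitsTest (Fin n) p k
  refine ⟨multilinearize Q, isMultilinear_multilinearize Q,
    (totalDegree_multilinearize_le Q).trans
      (totalDegree_crtLowDigitsTest_le (fun i => (hp i).one_le) hD),
    weaklyRepresentsOR_of_not_dvd hm ?_ fun x hx hx0 => ?_⟩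
  · rw [eval_multilinearize (x := 0) (fun _ => Or.inl rfl),
      eval_zero_crtLowDigitsTest fun i => (hp i).one_lt]
  · rw [eval_multilinearize hx]
    have hweight_le : #{i | x i = 1} ≤ n := (card_filter_le _ _).trans_eq (card_fin n)
    have hweight_ne : #{i | x i = 1} ≠ 0 := by
      obtain ⟨j, hj⟩ := Function.ne_iff.mp hx0
      exact (card_pos.mpr ⟨j, mem_filter.mpr ⟨mem_univ j, (hx j).resolve_left hj⟩⟩).ne'
    obtain ⟨i, hi⟩ := exists_not_pow_dvd_of_lt_prod hp hinj hweight_ne (hweight_le.trans_lt hn)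
    intro hdvd
    exact intCast_eval_crtLowDigitsTest_ne_zero hp hinj hx hi <|
      (ZMod.intCast_zmod_eq_zero_iff_dvd _ _).mpr <|
        (Int.natCast_dvd_natCast.mpr (hpm i)).trans hdvd

theorem exists_le_pow_and_le_two_mul_rpow {n r : ℕ} (hn : 1 ≤ n) (hr : r ≠ 0) :
    ∃ u : ℕ, n ≤ u ^ r ∧ (u : ℝ) ≤ 2 * (n : ℝ) ^ ((1 : ℝ) / r) := by
  set y : ℝ := (n : ℝ) ^ ((1 : ℝ) / r)
  have hy : 1 ≤ y := Real.one_le_rpow (by exact_mod_cast hn) (by positivity)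
  refine ⟨⌈y⌉₊, ?_, ?_⟩
  · have hyr : y ^ r = n := by
      rw [← Real.rpow_natCast, ← Real.rpow_mul (Nat.cast_nonneg n), one_div,
        inv_mul_cancel₀ (Nat.cast_ne_zero.mpr hr), Real.rpow_one]
    exact_mod_cast hyr ▸ pow_le_pow_left₀ (by positivity) (Nat.le_ceil y) r
  · linarith [Nat.ceil_lt_add_one (zero_le_one.trans hy)]

/-- Barrington–Beigel–Rudich: if `m` has `r ≥ 2` distinct prime factors, then `OR_n` is
weakly representable modulo `m` by a multilinear integer polynomial of degree `O(n^{1/r})`. -/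
theorem or_weak_representation_composite
    (m r : ℕ) (p α : Fin r → ℕ)
    (hr : 2 ≤ r)
    (hp : ∀ i, (p i).Prime)
    (hinj : Function.Injective p)
    (hα : ∀ i, 1 ≤ α i)
    (hm : m = ∏ i, p i ^ α i) :
    ∃ c : ℝ, 0 < c ∧
      ∀ n : ℕ, 1 ≤ n →
        ∃ P : MvPolynomial (Fin n) ℤ,
          IsMultilinear P ∧
          (P.totalDegree : ℝ) ≤ c * (n : ℝ) ^ ((1 : ℝ) / r) ∧
          WeaklyRepresentsOR P m := by
  have hr0 : r ≠ 0 := by omega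
  have hm_pos : 0 < m := hm ▸ prod_pos fun i _ => pow_pos (hp i).pos _
  have hpm (i : Fin r) : p i ∣ m :=
    hm ▸ (dvd_pow_self _ (by have := hα i; omega)).trans (dvd_prod_of_mem _ (mem_univ i))
  refine ⟨2 * ∏ i, (p i : ℝ),
    mul_pos two_pos (prod_pos fun i _ => by exact_mod_cast (hp i).pos), fun n hn => ?_⟩
  obtain ⟨u, hnu, hu⟩ := exists_le_pow_and_le_two_mul_rpow hn hr0
  have hu0 : u ≠ 0 := by rintro rfl; rw [zero_pow hr0] at hnu; omega
  choose k hk using fun i => exists_pow_lt_le_mul (hp i).one_lt hu0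
  have hn_lt : n < ∏ i, p i ^ k i := hnu.trans_lt <| by
    simpa using prod_lt_prod_of_nonempty (fun i _ => Nat.pos_of_ne_zero hu0)
      (fun i _ => (hk i).1) (univ_nonempty_iff.mpr ⟨⟨0, by omega⟩⟩)
  obtain ⟨P, hP, hPdeg, hPrep⟩ := exists_multilinear_weaklyRepresentsOR hp hinj hpm hm_pos hn_lt
    (D := (∏ i, p i) * u) fun i => (hk i).2.trans <|
      Nat.mul_le_mul_right u (single_le_prod' (fun j _ => (hp j).one_le) (mem_univ i))
  refine ⟨P, hP, ?_, hPrep⟩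
  calc (P.totalDegree : ℝ) ≤ (∏ i, (p i : ℝ)) * u := by exact_mod_cast hPdeg
    _ ≤ (∏ i, (p i : ℝ)) * (2 * (n : ℝ) ^ ((1 : ℝ) / r)) := by gcongr
    _ = 2 * (∏ i, (p i : ℝ)) * (n : ℝ) ^ ((1 : ℝ) / r) := by ring
end

section
/- Let p be a prime, let n ≥ 1, and let P be a polynomial with integer coefficients in n variables such that for every x ∈ {0,1}^n, P(x) ≡ 0 (mod p) if and only if x = (0, …, 0). Then the total degree of P is at least n/(p−1). -/
open MvPolynomial Finset
set_option maxHeartbeats 1000000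

lemma key_sum {R : Type*} [CommRing R] {n : ℕ} (Q : MvPolynomial (Fin n) R)
    (h : Q.totalDegree < n) :
    ∑ x : Fin n → Bool, (∏ i, if x i then (-1 : R) else 1) *
      MvPolynomial.eval (fun i => if x i then (1:R) else 0) Q = 0 := by
  have step : ∀ x : Fin n → Bool, (∏ i, if x i then (-1 : R) else 1) *
      MvPolynomial.eval (fun i => if x i then (1:R) else 0) Q
      = ∑ α ∈ Q.support, (∏ i, if x i then (-1 : R) else 1) *
        MvPolynomial.eval (fun i => if x i then (1:R) else 0) (monomial α (Q.coeff α)) := by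
    intro x
    conv_lhs => rw [Q.as_sum]
    rw [map_sum, Finset.mul_sum]
  rw [Finset.sum_congr rfl fun x _ => step x, Finset.sum_comm]
  refine Finset.sum_eq_zero fun α hα => ?_
  -- there is a variable missing from α
  obtain ⟨i₀, hi₀⟩ : ∃ i, α i = 0 := by
    by_contra hc
    push_neg at hc
    have h1 : (n : ℕ) ≤ α.sum fun _ e => e := by
      rw [Finsupp.sum_fintype _ _ (fun _ => rfl)]
      calc (n : ℕ) = ∑ _i : Fin n, 1 := by simp
      _ ≤ ∑ i, α i := Finset.sum_le_sum fun i _ => Nat.one_le_iff_ne_zero.2 (hc i)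
    exact absurd ((MvPolynomial.le_totalDegree hα).trans_lt h) (not_lt.2 h1)
  have hterm : ∀ x : Fin n → Bool,
      (∏ i, if x i then (-1 : R) else 1) *
        MvPolynomial.eval (fun i => if x i then (1:R) else 0) (monomial α (Q.coeff α))
      = Q.coeff α * ∏ i, ((if x i then (-1:R) else 1) * (if x i then (1:R) else 0) ^ α i) := by
    intro x
    rw [MvPolynomial.eval_monomial, Finsupp.prod_pow, Finset.prod_mul_distrib]
    ring
  rw [Finset.sum_congr rfl fun x _ => hterm x, ← Finset.mul_sum]
  have := Finset.prod_univ_sum (fun _ : Fin n => (Finset.univ : Finset Bool))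
    (fun i b => (if b then (-1:R) else 1) * (if b then (1:R) else 0) ^ α i)
  rw [Fintype.piFinset_univ] at this
  rw [← this]
  have : ∏ i, ∑ b : Bool, (if b then (-1:R) else 1) * (if b then (1:R) else 0) ^ α i = 0 := by
    apply Finset.prod_eq_zero (Finset.mem_univ i₀)
    simp [hi₀]
  rw [this, mul_zero]

/-- If an integer polynomial `P` in `n` variables vanishes modulo a prime `p` exactly at the
all-zero 0-1 vector, then its total degree is at least `n / (p - 1)`. -/
theorem degree_lower_bound_weak_representation_mod_prime
    (p n : ℕ) (hp : p.Prime) (hn : 1 ≤ n)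
    (P : MvPolynomial (Fin n) ℤ)
    (h : ∀ x : Fin n → ℤ, (∀ i, x i = 0 ∨ x i = 1) →
      ((p : ℤ) ∣ MvPolynomial.eval x P ↔ x = 0)) :
    (n : ℝ) / ((p : ℝ) - 1) ≤ (P.totalDegree : ℝ) := by
  haveI : Fact p.Prime := ⟨hp⟩
  have hmain : n ≤ (p - 1) * P.totalDegree := by
    by_contra hlt
    push_neg at hlt
    set P' : MvPolynomial (Fin n) (ZMod p) := MvPolynomial.map (Int.castRingHom (ZMod p)) P
      with hP'
    set Q : MvPolynomial (Fin n) (ZMod p) := 1 - P' ^ (p - 1) with hQ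
    have hdeg : Q.totalDegree < n := by
      have h1 : (P' ^ (p-1)).totalDegree ≤ (p-1) * P'.totalDegree := totalDegree_pow _ _
      have h2 : P'.totalDegree ≤ P.totalDegree := by
        rw [MvPolynomial.totalDegree, MvPolynomial.totalDegree]
        exact Finset.sup_mono (support_map_subset _ _)
      have h3 : Q.totalDegree ≤ max (1 : MvPolynomial (Fin n) (ZMod p)).totalDegree
          (-(P' ^ (p-1))).totalDegree := by
        rw [hQ, sub_eq_add_neg]; exact totalDegree_add _ _
      rw [totalDegree_one, totalDegree_neg] at h3
      calc Q.totalDegree ≤ max 0 ((P'^(p-1)).totalDegree) := h3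
        _ = (P'^(p-1)).totalDegree := by simp
        _ ≤ (p-1) * P'.totalDegree := h1
        _ ≤ (p-1) * P.totalDegree := Nat.mul_le_mul_left _ h2
        _ < n := hlt
    have hkey := key_sum Q hdeg
    -- evaluate each term
    have heval : ∀ x : Fin n → Bool,
        MvPolynomial.eval (fun i => if x i then (1 : ZMod p) else 0) P'
        = ((MvPolynomial.eval (fun i => if x i then (1:ℤ) else 0) P : ℤ) : ZMod p) := by
      intro x
      rw [hP', eval_map]
      have h0 := eval₂_comp_left (Int.castRingHom (ZMod p)) (RingHom.id ℤ)
        (fun i => if x i then (1:ℤ) else 0) P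
      rw [eval₂_id, RingHom.comp_id] at h0
      have h0' : ((MvPolynomial.eval (fun i => if x i then (1:ℤ) else 0) P : ℤ) : ZMod p)
          = eval₂ (Int.castRingHom (ZMod p))
            ((Int.castRingHom (ZMod p)) ∘ fun i => if x i then (1:ℤ) else 0) P := h0
      rw [h0']
      congr 1
      funext i; by_cases hxi : x i <;> simp [hxi]
    have hsum1 : ∑ x : Fin n → Bool, (∏ i, if x i then (-1 : ZMod p) else 1) *
        MvPolynomial.eval (fun i => if x i then (1:ZMod p) else 0) Q = 1 := by
      rw [Finset.sum_eq_single (fun _ => false)]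
      · have hz : ((fun i => if (false : Bool) then (1:ℤ) else 0) : Fin n → ℤ) = 0 := by
          funext i; simp
        have hdvd : (p : ℤ) ∣ MvPolynomial.eval (0 : Fin n → ℤ) P :=
          (h 0 (fun i => Or.inl rfl)).2 rfl
        have : MvPolynomial.eval (fun i => if (false:Bool) then (1:ZMod p) else 0) P' = 0 := by
          rw [heval]
          simp only [if_neg Bool.false_ne_true]
          rw [show ((fun _ : Fin n => (0:ℤ))) = (0 : Fin n → ℤ) from rfl]
          exact (ZMod.intCast_zmod_eq_zero_iff_dvd _ _).2 hdvd
        simp only [hQ, map_sub, map_one, map_pow, this]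
        rw [zero_pow (Nat.sub_ne_zero_of_lt hp.one_lt)]
        simp
      · intro x _ hx
        obtain ⟨i, hi⟩ : ∃ i, x i = true := by
          by_contra hc
          push_neg at hc
          exact hx (funext fun i => by simpa using hc i)
        have hx0 : (fun i => if x i then (1:ℤ) else 0) ≠ (0 : Fin n → ℤ) := by
          intro hcon
          have := congrFun hcon i
          rw [hi] at this
          simp at this
        have hnd : ¬ ((p:ℤ) ∣ MvPolynomial.eval (fun i => if x i then (1:ℤ) else 0) P) := by
          intro hd
          exact hx0 ((h _ (fun i => by by_cases hxi : x i <;> simp [hxi])).1 hd)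
        have hne : MvPolynomial.eval (fun i => if x i then (1:ZMod p) else 0) P' ≠ 0 := by
          rw [heval]
          intro hc
          exact hnd ((ZMod.intCast_zmod_eq_zero_iff_dvd _ _).1 hc)
        have : MvPolynomial.eval (fun i => if x i then (1:ZMod p) else 0) Q = 0 := by
          simp only [hQ, map_sub, map_one, map_pow]
          rw [ZMod.pow_card_sub_one_eq_one hne, sub_self]
        rw [this, mul_zero]
      · intro hmem
        exact absurd (Finset.mem_univ _) hmem
    rw [hkey] at hsum1
    exact zero_ne_one hsum1
  have hp2 : (2 : ℝ) ≤ p := by exact_mod_cast hp.two_le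
  have hps : (0:ℝ) < (p:ℝ) - 1 := by linarith
  rw [div_le_iff₀ hps]
  have : ((n : ℝ)) ≤ ((p - 1 : ℕ) : ℝ) * (P.totalDegree : ℝ) := by exact_mod_cast hmain
  rw [Nat.cast_sub hp.one_lt.le] at this
  push_cast at this ⊢
  linarith
end

section
/- Let m = p_1^{e_1} p_2^{e_2} ⋯ p_ℓ^{e_ℓ} with p_1, …, p_ℓ distinct primes, and let f and g be multilinear polynomials in n variables with integer coefficients such that g is a 1-a-strong representation of f modulo m. Then there exist multilinear polynomials g_1, …, g_ℓ in the same n variables with integer coefficients such that: (i) g ≡ f + p_1^{e_1} g_1 + p_2^{e_2} g_2 + ⋯ + p_ℓ^{e_ℓ} g_ℓ (mod m), i.e., corresponding coefficients are congruent modulo m; (ii) no two of g_1, …, g_ℓ have a monomial whose coefficient is nonzero modulo m in common; and (iii) no g_i has a monomial with coefficient nonzero modulo m in common with a monomial of f whose coefficient is nonzero modulo m. -/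
/-- `g` is a 1-a-strong representation of `f` modulo `m = ∏ i, p i ^ e i`:
for every monomial `α`, the coefficients of `f` and `g` are congruent modulo some
`p j ^ e j`, and if they disagree modulo some `p i ^ e i`, then the coefficient of `f`
at `α` is `≡ 0 (mod m)`. -/
def OneAStrongRep {n ℓ : ℕ} (m : ℕ) (p e : Fin ℓ → ℕ)
    (f g : MvPolynomial (Fin n) ℤ) : Prop :=
  ∀ α : Fin n →₀ ℕ,
    (∃ j : Fin ℓ, ((p j : ℤ) ^ (e j)) ∣ (f.coeff α - g.coeff α)) ∧
    ((∃ i : Fin ℓ, ¬ ((p i : ℤ) ^ (e i)) ∣ (f.coeff α - g.coeff α)) →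
      (m : ℤ) ∣ f.coeff α)

/-- A 1-a-strong representation `g` of `f` modulo `m` can be written as
`f + p_1^{e_1} g_1 + ⋯ + p_ℓ^{e_ℓ} g_ℓ (mod m)`, where no two of the `g_i` share a monomial
with coefficient nonzero mod `m`, nor does any `g_i` share such a monomial with `f`. -/
theorem one_a_strong_rep_decomposition
    (n m ℓ : ℕ) (p e : Fin ℓ → ℕ)
    (hp : ∀ i, (p i).Prime)
    (hinj : Function.Injective p)
    (he : ∀ i, 1 ≤ e i)
    (hm : m = ∏ i, p i ^ e i)
    (f g : MvPolynomial (Fin n) ℤ)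
    (hf : IsMultilinear f) (hg : IsMultilinear g)
    (hrep : OneAStrongRep m p e f g) :
    ∃ G : Fin ℓ → MvPolynomial (Fin n) ℤ,
      (∀ i, IsMultilinear (G i)) ∧
      (∀ α : Fin n →₀ ℕ,
        (m : ℤ) ∣ (g.coeff α - (f.coeff α + ∑ i, (p i : ℤ) ^ (e i) * (G i).coeff α))) ∧
      (∀ i j : Fin ℓ, i ≠ j → ∀ α : Fin n →₀ ℕ,
        ¬ (¬ ((m : ℤ) ∣ (G i).coeff α) ∧ ¬ ((m : ℤ) ∣ (G j).coeff α))) ∧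
      (∀ i : Fin ℓ, ∀ α : Fin n →₀ ℕ,
        ¬ (¬ ((m : ℤ) ∣ (G i).coeff α) ∧ ¬ ((m : ℤ) ∣ f.coeff α))) := by
  classical
  set D : MvPolynomial (Fin n) ℤ := g - f with hD
  have hDcoeff : ∀ α, D.coeff α = g.coeff α - f.coeff α := by
    intro α; simp [hD, MvPolynomial.coeff_sub]
  have hchoice : ∀ α, ∃ j : Fin ℓ, ((p j : ℤ) ^ (e j)) ∣ D.coeff α := by
    intro α
    obtain ⟨j, hj⟩ := (hrep α).1
    refine ⟨j, ?_⟩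
    rw [hDcoeff]
    exact (dvd_sub_comm).mp hj
  choose jf hjf using hchoice
  -- if all prime powers divide z, then m divides z
  have hall : ∀ z : ℤ, (∀ i, ((p i : ℤ) ^ (e i)) ∣ z) → (m : ℤ) ∣ z := by
    intro z hz
    have hmz : (m : ℤ) = ∏ i, ((p i : ℤ)) ^ (e i) := by
      rw [hm]; push_cast; ring
    rw [hmz]
    refine Finset.prod_dvd_of_coprime ?_ (fun i _ => hz i)
    intro i _ j _ hij
    have hco : Nat.Coprime (p i) (p j) :=
      (Nat.coprime_primes (hp i) (hp j)).mpr (fun h => hij (hinj h))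
    exact (Nat.isCoprime_iff_coprime.mpr hco).pow
  set S : Fin ℓ → Finset (Fin n →₀ ℕ) :=
    fun i => D.support.filter (fun α => ¬ (m : ℤ) ∣ D.coeff α ∧ jf α = i) with hS
  set G : Fin ℓ → MvPolynomial (Fin n) ℤ :=
    fun i => ∑ α ∈ S i, MvPolynomial.monomial α (D.coeff α / ((p (jf α) : ℤ)) ^ (e (jf α)))
    with hG
  have hGcoeff : ∀ i α, (G i).coeff α =
      if α ∈ S i then D.coeff α / ((p (jf α) : ℤ)) ^ (e (jf α)) else 0 := by
    intro i α
    rw [hG]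
    simp only [MvPolynomial.coeff_sum, MvPolynomial.coeff_monomial]
    rw [Finset.sum_ite_eq' (S i) α]
  -- key fact: nonzero-mod-m coefficient forces membership
  have hkey : ∀ i α, ¬ ((m : ℤ) ∣ (G i).coeff α) → α ∈ S i := by
    intro i α h
    by_contra hα
    rw [hGcoeff i α, if_neg hα] at h
    exact h (dvd_zero _)
  have hSmem : ∀ i α, α ∈ S i → (¬ (m : ℤ) ∣ D.coeff α) ∧ jf α = i := by
    intro i α hα
    exact (Finset.mem_filter.mp hα).2
  refine ⟨G, ?_, ?_, ?_, ?_⟩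
  · -- multilinearity
    intro i α hα k
    have hαS : α ∈ S i := by
      by_contra h
      have : (G i).coeff α = 0 := by rw [hGcoeff i α, if_neg h]
      exact (MvPolynomial.mem_support_iff.mp hα) this
    have hαD : α ∈ D.support := (Finset.mem_filter.mp hαS).1
    have : α ∈ g.support ∪ f.support := MvPolynomial.support_sub _ _ _ hαD
    rcases Finset.mem_union.mp this with h | h
    · exact hg α h k
    · exact hf α h k
  · -- congruence
    intro α
    by_cases h : (m : ℤ) ∣ D.coeff α
    · have hz : ∀ i, (G i).coeff α = 0 := by
        intro i
        rw [hGcoeff i α]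
        rw [if_neg]
        intro hα
        exact (hSmem i α hα).1 h
      simp only [hz, mul_zero, Finset.sum_const_zero, add_zero]
      rw [← hDcoeff]; exact h
    · have hαD : α ∈ D.support := by
        rw [MvPolynomial.mem_support_iff]
        intro h0
        exact h (h0 ▸ dvd_zero _)
      have hsum : (∑ i, (p i : ℤ) ^ (e i) * (G i).coeff α) = D.coeff α := by
        rw [Finset.sum_eq_single (jf α)]
        · rw [hGcoeff, if_pos]
          · exact Int.mul_ediv_cancel' (hjf α)
          · exact Finset.mem_filter.mpr ⟨hαD, h, rfl⟩
        · intro i _ hi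
          rw [hGcoeff, if_neg, mul_zero]
          intro hα
          exact hi ((hSmem i α hα).2).symm
        · intro h'; exact absurd (Finset.mem_univ _) h'
      rw [hsum, hDcoeff]
      ring_nf
      exact dvd_zero _
  · -- disjointness among the G i
    intro i j hij α ⟨hi, hj⟩
    have h1 := (hSmem i α (hkey i α hi)).2
    have h2 := (hSmem j α (hkey j α hj)).2
    exact hij (h1 ▸ h2 ▸ rfl)
  · -- disjointness with f
    intro i α ⟨hGi, hfα⟩
    have hmem := hkey i α hGi
    have hndvd : ¬ (m : ℤ) ∣ D.coeff α := (hSmem i α hmem).1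
    have : ∃ k : Fin ℓ, ¬ ((p k : ℤ) ^ (e k)) ∣ (f.coeff α - g.coeff α) := by
      by_contra hc
      push_neg at hc
      apply hndvd
      apply hall
      intro k
      rw [hDcoeff]
      exact (dvd_sub_comm).mp (hc k)
    exact hfα ((hrep α).2 this)
end

section
/- Let s_j denote the j-th elementary symmetric polynomial in 71 variables. Define G_1 = Σ_{j=1}^{7} (−1)^{j+1} s_j and G_2 = Σ_{j=1}^{8} (−1)^{j+1} s_j, and let P = 3·G_1 + 4·G_2 (a polynomial with integer coefficients of total degree 8). Then for every x ∈ {0,1}^{71}, P(x) ≡ 0 (mod 6) if and only if x = (0, …, 0); in particular, P weakly represents OR_{71} modulo 6. -/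
/-- `G₁ = Σ_{j=1}^{7} (−1)^{j+1} s_j` in 71 variables,
where `s_j` is the `j`-th elementary symmetric polynomial. -/
noncomputable def G₁ : MvPolynomial (Fin 71) ℤ :=
  ∑ j ∈ Finset.Icc 1 7, (-1 : MvPolynomial (Fin 71) ℤ) ^ (j + 1) *
    MvPolynomial.esymm (Fin 71) ℤ j

/-- `G₂ = Σ_{j=1}^{8} (−1)^{j+1} s_j` in 71 variables. -/
noncomputable def G₂ : MvPolynomial (Fin 71) ℤ :=
  ∑ j ∈ Finset.Icc 1 8, (-1 : MvPolynomial (Fin 71) ℤ) ^ (j + 1) *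
    MvPolynomial.esymm (Fin 71) ℤ j

/-- `P = 3·G₁ + 4·G₂`, a degree-8 polynomial in 71 variables. -/
noncomputable def P₆ : MvPolynomial (Fin 71) ℤ := 3 * G₁ + 4 * G₂

lemma eval_esymm_01 (x : Fin 71 → ℤ) (hx : ∀ i, x i = 0 ∨ x i = 1) (j : ℕ) :
    MvPolynomial.eval x (MvPolynomial.esymm (Fin 71) ℤ j) =
      ((Finset.univ.filter (fun i => x i = 1)).card.choose j : ℤ) := by
  classical
  set A := Finset.univ.filter (fun i : Fin 71 => x i = 1) with hA
  rw [MvPolynomial.esymm, map_sum]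
  have key : ∀ t ∈ Finset.powersetCard j (Finset.univ : Finset (Fin 71)),
      MvPolynomial.eval x (∏ i ∈ t, MvPolynomial.X i) =
        if t ⊆ A then 1 else 0 := by
    intro t _
    rw [map_prod]
    simp only [MvPolynomial.eval_X]
    by_cases h : t ⊆ A
    · simp only [if_pos h]
      apply Finset.prod_eq_one
      intro i hi
      have := h hi
      rw [hA, Finset.mem_filter] at this
      exact this.2
    · simp only [if_neg h]
      obtain ⟨i, hit, hiA⟩ := Finset.not_subset.mp h
      apply Finset.prod_eq_zero hit
      rcases hx i with h0 | h1
      · exact h0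
      · exact absurd (Finset.mem_filter.mpr ⟨Finset.mem_univ i, h1⟩) hiA
  rw [Finset.sum_congr rfl key, ← Finset.sum_filter]
  have : Finset.filter (fun t => t ⊆ A) (Finset.powersetCard j Finset.univ) =
      Finset.powersetCard j A := by
    ext t
    simp [Finset.mem_powersetCard, and_comm]
  rw [this]
  simp [Finset.card_powersetCard]

def F (k : ℕ) : ℤ :=
  3 * ∑ j ∈ Finset.Icc 1 7, (-1 : ℤ) ^ (j + 1) * (k.choose j : ℤ) +
  4 * ∑ j ∈ Finset.Icc 1 8, (-1 : ℤ) ^ (j + 1) * (k.choose j : ℤ)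

lemma eval_P6 (x : Fin 71 → ℤ) (hx : ∀ i, x i = 0 ∨ x i = 1) :
    MvPolynomial.eval x P₆ = F (Finset.univ.filter (fun i => x i = 1)).card := by
  simp only [P₆, G₁, G₂, map_add, map_mul, map_sum, map_pow, map_neg, map_one,
    map_ofNat, F]
  congr 2
  · exact Finset.sum_congr rfl fun j _ => by rw [eval_esymm_01 x hx]
  · exact Finset.sum_congr rfl fun j _ => by rw [eval_esymm_01 x hx]

lemma F_key : ∀ k ∈ Finset.range 72, ((6 : ℤ) ∣ F k ↔ k = 0) := by decide

/-- On every 0-1 vector `x`, `P₆(x) ≡ 0 (mod 6)` iff `x = 0`; in particular, `P₆`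
weakly represents `OR₇₁` modulo 6 (with a set `S` of least nonnegative residues mod 6). -/
theorem P6_weakly_represents_OR71_mod_6 :
    (∀ x : Fin 71 → ℤ, (∀ i, x i = 0 ∨ x i = 1) →
      ((6 : ℤ) ∣ MvPolynomial.eval x P₆ ↔ x = 0)) ∧
    (∃ S : Finset ℤ, (∀ s ∈ S, 0 ≤ s ∧ s < 6) ∧
      ∀ x : Fin 71 → ℤ, (∀ i, x i = 0 ∨ x i = 1) →
        ((MvPolynomial.eval x P₆) % 6 ∈ S ↔ x = 0)) := by
  have main : ∀ x : Fin 71 → ℤ, (∀ i, x i = 0 ∨ x i = 1) →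
      ((6 : ℤ) ∣ MvPolynomial.eval x P₆ ↔ x = 0) := by
    intro x hx
    rw [eval_P6 x hx]
    set k := (Finset.univ.filter (fun i => x i = 1)).card with hk
    have hk71 : k ∈ Finset.range 72 := by
      rw [Finset.mem_range]
      calc k ≤ (Finset.univ : Finset (Fin 71)).card := Finset.card_filter_le _ _
        _ < 72 := by simp
    rw [F_key k hk71]
    constructor
    · intro h0
      funext i
      rcases hx i with h | h
      · exact h
      · exfalso
        have : i ∈ Finset.univ.filter (fun i => x i = 1) :=
          Finset.mem_filter.mpr ⟨Finset.mem_univ i, h⟩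
        have := Finset.card_pos.mpr ⟨i, this⟩
        omega
    · intro h0
      rw [hk, Finset.card_eq_zero, Finset.filter_eq_empty_iff]
      intro i _
      simp [h0]
  refine ⟨main, ⟨{0}, by norm_num, fun x hx => ?_⟩⟩
  rw [Finset.mem_singleton, ← main x hx]
  exact ⟨fun h => Int.dvd_of_emod_eq_zero h, fun h => Int.emod_eq_zero_of_dvd h⟩
end

section
/- Let M be an R × C matrix over the rationals all of whose entries are 0 or 1, and suppose M has rank n over the rationals. Then there exist a positive integer k, an R × n matrix X with integer entries all equal to 0 or 1, and an n × C matrix Y with integer entries, such that k·M = X · Y (as matrices over the rationals, under the canonical embedding of the integers into the rationals). -/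
/-!
Choose `n` columns of `M` forming a basis of its column space; they form a 0-1 matrix `X`
with `M = X * B` for some rational `n × C` matrix `B`. If `k` is a common denominator of the
entries of `B`, then `Y = k • B` is an integer matrix and `k • M = X * Y`.
-/

open Module Submodule Set

theorem exists_fin_finrank_span_range_comp_eq (K : Type*) {V ι : Type*} [DivisionRing K]
    [AddCommGroup V] [Module K V] [Finite ι] (v : ι → V) :
    ∃ s : Fin (finrank K (span K (range v))) → ι,
      span K (range (v ∘ s)) = span K (range v) := by
  obtain ⟨κ, a, ha, hspan, hli⟩ := exists_linearIndependent' K v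
  have : Finite κ := Finite.of_injective a ha
  have : Fintype κ := Fintype.ofFinite κ
  have hcard : Fintype.card κ = finrank K (span K (range v)) := by
    rw [← hspan, finrank_span_eq_card hli]
  refine ⟨a ∘ (Fintype.equivFinOfCardEq hcard).symm, ?_⟩
  rw [← Function.comp_assoc, EquivLike.range_comp, hspan]

theorem Matrix.exists_submatrix_mul_eq {K m n : Type*} [Field K] [Fintype n]
    (A : Matrix m n K) : ∃ (s : Fin A.rank → n) (B : Matrix (Fin A.rank) n K),
      A.submatrix id s * B = A := by
  rw [rank_eq_finrank_span_cols]
  obtain ⟨s, hs⟩ := exists_fin_finrank_span_range_comp_eq K A.col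
  have hcol (j : n) : ∃ c : _ → K, ∑ t, c t • A.col (s t) = A.col j := by
    rw [← mem_span_range_iff_exists_fun K]
    exact hs.ge (subset_span (mem_range_self j))
  choose c hc using hcol
  refine ⟨s, Matrix.of fun t j => c j t, ?_⟩
  ext i j
  simpa [Matrix.mul_apply, Finset.sum_apply, mul_comm] using congrFun (hc j) i

theorem Rat.exists_intCast_eq_natCast_mul_of_den_dvd {q : ℚ} {k : ℕ} (h : q.den ∣ k) :
    ∃ z : ℤ, (k : ℚ) * q = z := by
  obtain ⟨d, rfl⟩ := h
  refine ⟨d * q.num, ?_⟩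
  push_cast
  rw [← Rat.mul_den_eq_num]
  ring

theorem Matrix.exists_pos_natCast_smul_eq_map_intCast {m n : Type*} [Fintype m] [Fintype n]
    (A : Matrix m n ℚ) :
    ∃ k : ℕ, 0 < k ∧ ∃ Z : Matrix m n ℤ, (k : ℚ) • A = Z.map Int.cast := by
  have hden (i : m) (j : n) : (A i j).den ∣ ∏ i, ∏ j, (A i j).den :=
    (Finset.dvd_prod_of_mem _ (Finset.mem_univ j)).trans
      (Finset.dvd_prod_of_mem (fun i => ∏ j, (A i j).den) (Finset.mem_univ i))
  choose Z hZ using fun i j => Rat.exists_intCast_eq_natCast_mul_of_den_dvd (hden i j)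
  exact ⟨∏ i, ∏ j, (A i j).den,
    Finset.prod_pos fun i _ => Finset.prod_pos fun j _ => (A i j).den_pos,
    Matrix.of Z, Matrix.ext hZ⟩

theorem Matrix.exists_zero_one_map_intCast_eq {m n R : Type*} [AddGroupWithOne R]
    (A : Matrix m n R) (h : ∀ i j, A i j = 0 ∨ A i j = 1) :
    ∃ X : Matrix m n ℤ, (∀ i j, X i j = 0 ∨ X i j = 1) ∧ X.map Int.cast = A := by
  have hentry (i : m) (j : n) : ∃ x : ℤ, (x = 0 ∨ x = 1) ∧ (x : R) = A i j := by
    rcases h i j with h | h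
    · exact ⟨0, Or.inl rfl, by simp [h]⟩
    · exact ⟨1, Or.inr rfl, by simp [h]⟩
  choose X hX01 hX using hentry
  exact ⟨Matrix.of X, hX01, Matrix.ext hX⟩

/-- A 0-1 matrix of rank `n` over the rationals satisfies `k·M = X · Y` for some positive
integer `k`, a 0-1 integer matrix `X` with `n` columns, and an integer matrix `Y` with
`n` rows (the product taken over the rationals via the canonical embedding `ℤ → ℚ`). -/
theorem zero_one_matrix_rank_integer_factorization
    (R C n : ℕ) (M : Matrix (Fin R) (Fin C) ℚ)
    (h01 : ∀ i j, M i j = 0 ∨ M i j = 1)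
    (hrank : M.rank = n) :
    ∃ (k : ℕ), 0 < k ∧
      ∃ (X : Matrix (Fin R) (Fin n) ℤ) (Y : Matrix (Fin n) (Fin C) ℤ),
        (∀ i j, X i j = 0 ∨ X i j = 1) ∧
        (k : ℚ) • M = (X * Y).map (Int.cast : ℤ → ℚ) := by
  subst hrank
  obtain ⟨s, B, hB⟩ := M.exists_submatrix_mul_eq
  obtain ⟨k, hk, Y, hY⟩ := B.exists_pos_natCast_smul_eq_map_intCast
  obtain ⟨X, hX01, hX⟩ :=
    (M.submatrix id s).exists_zero_one_map_intCast_eq fun i t => h01 i (s t)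
  refine ⟨k, hk, X, Y, hX01, ?_⟩
  calc (k : ℚ) • M = M.submatrix id s * ((k : ℚ) • B) := by rw [Matrix.mul_smul, hB]
    _ = (X * Y).map (Int.cast : ℤ → ℚ) := by
      rw [hY, ← hX]
      exact (Matrix.map_mul (f := Int.castRingHom ℚ)).symm
end

section
/- For every constant c > 0 there exist a constant c_1 > 0 and a threshold n_0 such that for all integers n ≥ n_0, setting ℓ = ⌊log₂ log₂ n⌋, one has exp(c · (log₂ n · (log₂ log₂ n)^{ℓ−1})^{1/ℓ}) ≤ (log₂ n)^{c_1}. -/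
open Real in
/-- With `ℓ = ⌊log₂ log₂ n⌋`, the quantity
`exp(c (log₂ n (log₂ log₂ n)^{ℓ-1})^{1/ℓ})` is polylogarithmic in `n`:
it is at most `(log₂ n)^{c₁}` for some constant `c₁ > 0` and all large enough `n`. -/
theorem exp_bound_polylog :
    ∀ c : ℝ, 0 < c →
      ∃ c₁ : ℝ, 0 < c₁ ∧
        ∃ n₀ : ℕ, ∀ n : ℕ, n₀ ≤ n →
          Real.exp (c * (Real.logb 2 n *
              (Real.logb 2 (Real.logb 2 n)) ^ (⌊Real.logb 2 (Real.logb 2 n)⌋₊ - 1))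
                ^ ((1 : ℝ) / (⌊Real.logb 2 (Real.logb 2 n)⌋₊ : ℝ)))
            ≤ (Real.logb 2 n) ^ c₁ := by
  intro c hc
  refine ⟨4 * c / Real.log 2, by positivity, 16, fun n hn => ?_⟩
  set L : ℝ := Real.logb 2 n with hL
  set M : ℝ := Real.logb 2 L with hM
  set l : ℕ := ⌊M⌋₊ with hl
  have hn16 : (16:ℝ) ≤ (n:ℝ) := by exact_mod_cast hn
  have hL4 : (4:ℝ) ≤ L := by
    have h16 : Real.logb 2 (16:ℝ) = 4 := by
      rw [show (16:ℝ) = 2 ^ (4:ℕ) by norm_num, Real.logb_pow, Real.logb_self_eq_one] <;>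
        norm_num
    calc (4:ℝ) = Real.logb 2 16 := h16.symm
      _ ≤ L := Real.logb_le_logb_of_le (by norm_num) (by norm_num) hn16
  have hLpos : 0 < L := by linarith
  have hM2 : (2:ℝ) ≤ M := by
    have h4 : Real.logb 2 (4:ℝ) = 2 := by
      rw [show (4:ℝ) = 2 ^ (2:ℕ) by norm_num, Real.logb_pow, Real.logb_self_eq_one] <;>
        norm_num
    calc (2:ℝ) = Real.logb 2 4 := h4.symm
      _ ≤ M := Real.logb_le_logb_of_le (by norm_num) (by norm_num) hL4
  have hMpos : 0 < M := by linarith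
  have hl2 : 2 ≤ l := Nat.le_floor (by exact_mod_cast hM2)
  have hlpos : 0 < (l:ℝ) := by exact_mod_cast Nat.lt_of_lt_of_le (by norm_num) hl2
  have hlM : (l:ℝ) ≤ M := Nat.floor_le hMpos.le
  have hMl1 : M < (l:ℝ) + 1 := Nat.lt_floor_add_one M
  -- L = 2 ^ M
  have hL2M : L = (2:ℝ) ^ M := (Real.rpow_logb (by norm_num) (by norm_num) hLpos).symm
  -- L ≤ 4 ^ l
  have hL4l : L ≤ (4:ℝ) ^ l := by
    have h1 : (4:ℝ) ^ l = (2:ℝ) ^ (((2 * l : ℕ)) : ℝ) := by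
      rw [Real.rpow_natCast, pow_mul]; norm_num
    rw [h1, hL2M]
    apply Real.rpow_le_rpow_of_exponent_le (by norm_num)
    have : (1:ℝ) ≤ (l:ℝ) := by linarith
    push_cast
    linarith
  -- key: L * M ^ (l - 1) ≤ (4 * M) ^ l
  have hkey : L * M ^ (l - 1) ≤ (4 * M) ^ l := by
    have h1 : M ^ (l - 1) ≤ M ^ l :=
      pow_le_pow_right₀ (by linarith) (Nat.sub_le l 1)
    calc L * M ^ (l - 1) ≤ (4:ℝ) ^ l * M ^ l := by
          apply mul_le_mul hL4l h1 (by positivity) (by positivity)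
      _ = (4 * M) ^ l := (mul_pow 4 M l).symm
  -- so X ≤ 4M
  have hXpos : (0:ℝ) ≤ L * M ^ (l - 1) := by positivity
  have hX : (L * M ^ (l - 1)) ^ ((1:ℝ) / (l:ℝ)) ≤ 4 * M := by
    have h2 : ((4 * M) ^ l : ℝ) ^ ((1:ℝ) / (l:ℝ)) = 4 * M := by
      rw [← Real.rpow_natCast (4 * M) l, ← Real.rpow_mul (by positivity)]
      rw [mul_one_div, div_self (ne_of_gt hlpos), Real.rpow_one]
    calc (L * M ^ (l - 1)) ^ ((1:ℝ) / (l:ℝ))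
        ≤ ((4 * M) ^ l : ℝ) ^ ((1:ℝ) / (l:ℝ)) :=
          Real.rpow_le_rpow hXpos hkey (by positivity)
      _ = 4 * M := h2
  -- RHS: L ^ c₁ = exp ((4c/log 2) * log L) and log L = log 2 * M
  have hlog2 : (0:ℝ) < Real.log 2 := Real.log_pos (by norm_num)
  have hlogL : Real.log L = Real.log 2 * M := by
    rw [hM, Real.logb]
    field_simp
  rw [Real.rpow_def_of_pos hLpos]
  apply Real.exp_le_exp.mpr
  rw [hlogL]
  have : Real.log 2 * M * (4 * c / Real.log 2) = 4 * c * M := by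
    field_simp
  rw [this]
  calc c * ((L * M ^ (l - 1)) ^ ((1:ℝ) / (l:ℝ))) ≤ c * (4 * M) := by
        exact mul_le_mul_of_nonneg_left hX hc.le
    _ = 4 * c * M := by ring
end
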